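/- Let φ be plurisubharmonic on a domain D ⊂ ℂ^m and let p(z, w) = z − w. Then for every z₀ ∈ D, the Lelong number of p*φ at the point (z₀, 0) ∈ ℂ^m × ℂ^m equals the Lelong number of φ at z₀: ν(φ(z−w), (z₀, 0)) = ν(φ, z₀). -/

import Mathlib

open MeasureTheory Real Filter Metric
open scoped ENNReal NNReal

noncomputable section

instance (n : ℕ) : MeasurableSpace (EuclideanSpace ℂ (Fin n)) :=
  MeasurableSpace.comap WithLp.ofLp MeasurableSpace.pi
instance (n : ℕ) : BorelSpace (EuclideanSpace ℂ (Fin n)) := PiLp.borelSpace _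
instance (n : ℕ) : MeasureSpace (EuclideanSpace ℂ (Fin n)) :=
  ⟨Measure.map (WithLp.toLp 2) (MeasureTheory.MeasureSpace.pi (α := fun _ : Fin n => ℂ)).volume⟩

/-- Subharmonicity on a set in ℂ, via the holomorphic (harmonic) majorant test. -/
def SubharmonicOnC (u : ℂ → EReal) (s : Set ℂ) : Prop :=
  UpperSemicontinuousOn u s ∧
  ∀ c : ℂ, ∀ r : ℝ, 0 < r → closedBall c r ⊆ s →
    ∀ f : ℂ → ℂ, DifferentiableOn ℂ f (closedBall c r) →
      (∀ z ∈ sphere c r, u z ≤ ((f z).re : EReal)) →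
      ∀ z ∈ closedBall c r, u z ≤ ((f z).re : EReal)

/-- Plurisubharmonicity on a set: upper semicontinuous and subharmonic on every complex line. -/
def PSHOn {E : Type*} [NormedAddCommGroup E] [NormedSpace ℂ E]
    (u : E → EReal) (s : Set E) : Prop :=
  UpperSemicontinuousOn u s ∧
  ∀ a b : E, SubharmonicOnC (fun t : ℂ => u (a + t • b)) {t : ℂ | a + t • b ∈ s}

/-- The Lelong number of `u` at `a`:
`sup {c ≥ 0 : u ≤ c log‖z - a‖ + O(1) near a}`. -/
def lelong {E : Type*} [NormedAddCommGroup E] [NormedSpace ℂ E]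
    (u : E → EReal) (a : E) : EReal :=
  sSup ((fun c : ℝ => (c : EReal)) ''
    {c : ℝ | 0 ≤ c ∧ ∃ C : ℝ, ∀ᶠ z in nhdsWithin a {a}ᶜ,
      u z ≤ ((c * Real.log ‖z - a‖ + C : ℝ) : EReal)})

/-- `e^t` as a value in `ℝ≥0∞`, for `t : EReal`. -/
def expE (t : EReal) : ℝ≥0∞ :=
  if t = ⊤ then ⊤ else if t = ⊥ then 0 else ENNReal.ofReal (Real.exp t.toReal)

/-- The complex singularity exponent of `u` at `a`:
`sup {c ≥ 0 : e^{-2cu} is integrable near a}`. -/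
def cse {F : Type*} [TopologicalSpace F] [MeasureSpace F] (u : F → EReal) (a : F) : EReal :=
  sSup ((fun c : ℝ => (c : EReal)) ''
    {c : ℝ | 0 ≤ c ∧ ∃ U ∈ nhds a, (∫⁻ z in U, expE (((-2 * c : ℝ) : EReal) * u z)) < ⊤})

/-- The action of the unitary group `U(n)` on `ℂⁿ`. -/
def uact {n : ℕ} (g : Matrix.unitaryGroup (Fin n) ℂ) (z : EuclideanSpace ℂ (Fin n)) :
    EuclideanSpace ℂ (Fin n) :=
  (WithLp.equiv 2 _).symm ((g : Matrix (Fin n) (Fin n) ℂ).mulVec ((WithLp.equiv 2 _) z))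

/-- Sub-mean-value consequence at the center: if a plurisubharmonic function is bounded above
by `M` on the sphere of radius `r` (inside the domain) then its value at the center is ≤ `M`. -/
lemma psh_center_le (m : ℕ) (hm : 0 < m) (D : Set (EuclideanSpace ℂ (Fin m)))
    (φ : EuclideanSpace ℂ (Fin m) → EReal) (hφ : PSHOn φ D)
    (z₀ : EuclideanSpace ℂ (Fin m)) (M r : ℝ) (hr : 0 < r)
    (hball : Metric.closedBall z₀ r ⊆ D)
    (hsph : ∀ z : EuclideanSpace ℂ (Fin m), ‖z - z₀‖ = r → φ z ≤ (M : EReal)) :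
    φ z₀ ≤ (M : EReal) := by
  set b : EuclideanSpace ℂ (Fin m) := EuclideanSpace.single ⟨0, hm⟩ 1 with hbdef
  have hb : ‖b‖ = 1 := by simp [hbdef, EuclideanSpace.norm_single]
  obtain ⟨-, hsub⟩ := hφ.2 z₀ b
  have hnorm : ∀ t : ℂ, ‖z₀ + t • b - z₀‖ = ‖t‖ := by
    intro t; rw [add_sub_cancel_left, norm_smul, hb, mul_one]
  have hsubset : Metric.closedBall (0 : ℂ) r ⊆ {t : ℂ | z₀ + t • b ∈ D} := by
    intro t ht
    apply hball
    rw [Metric.mem_closedBall, dist_eq_norm, hnorm]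
    simpa [dist_eq_norm] using ht
  have hsphere : ∀ t ∈ Metric.sphere (0 : ℂ) r,
      (fun t : ℂ => φ (z₀ + t • b)) t ≤ ((((fun _ : ℂ => (M : ℂ)) t).re : ℝ) : EReal) := by
    intro t ht
    have htn : ‖t‖ = r := by simpa [dist_eq_norm] using ht
    have := hsph (z₀ + t • b) (by rw [hnorm]; exact htn)
    simpa using this
  have key := hsub 0 r hr hsubset (fun _ => (M : ℂ)) (differentiableOn_const _) hsphere 0
    (Metric.mem_closedBall_self hr.le)
  simpa using key

/-- The Lelong number of `φ(z - w)` at `(z₀, 0)` equals the Lelong number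
of `φ` at `z₀`. -/
theorem lelong_pullback_diff (m : ℕ) (D : Set (EuclideanSpace ℂ (Fin m))) (hD : IsOpen D)
    (φ : EuclideanSpace ℂ (Fin m) → EReal) (hφ : PSHOn φ D) (z₀ : EuclideanSpace ℂ (Fin m))
    (hz₀ : z₀ ∈ D) :
    lelong (fun zw : EuclideanSpace ℂ (Fin m) × EuclideanSpace ℂ (Fin m) => φ (zw.1 - zw.2))
        (z₀, 0) = lelong φ z₀ := by
  unfold lelong
  congr 1
  apply congrArg
  ext c
  simp only [Set.mem_setOf_eq]
  rcases Nat.eq_zero_or_pos m with hm | hm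
  · -- trivial case: the space is a single point
    subst hm
    haveI : Subsingleton (EuclideanSpace ℂ (Fin 0)) :=
      (WithLp.equiv 2 (Fin 0 → ℂ)).subsingleton
    have h1 : ({z₀}ᶜ : Set (EuclideanSpace ℂ (Fin 0))) = ∅ :=
      Set.eq_empty_iff_forall_notMem.mpr fun x hx => hx (Subsingleton.elim _ _)
    have h2 : (({((z₀, 0) : EuclideanSpace ℂ (Fin 0) × EuclideanSpace ℂ (Fin 0))}ᶜ
        : Set (EuclideanSpace ℂ (Fin 0) × EuclideanSpace ℂ (Fin 0)))) = ∅ :=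
      Set.eq_empty_iff_forall_notMem.mpr fun x hx => hx (Subsingleton.elim _ _)
    simp only [h1, h2, nhdsWithin_empty, Filter.eventually_bot]
  constructor
  · -- product bound implies base bound (restrict to w = 0)
    rintro ⟨hc, C, hev⟩
    refine ⟨hc, C, ?_⟩
    have hcont : Filter.Tendsto
        (fun z : EuclideanSpace ℂ (Fin m) => ((z, 0) : EuclideanSpace ℂ (Fin m) × EuclideanSpace ℂ (Fin m)))
        (nhdsWithin z₀ {z₀}ᶜ)
        (nhdsWithin (z₀, 0) {((z₀, 0) : EuclideanSpace ℂ (Fin m) × EuclideanSpace ℂ (Fin m))}ᶜ) := by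
      rw [tendsto_nhdsWithin_iff]
      constructor
      · exact ((continuous_id.prodMk continuous_const).tendsto z₀).mono_left nhdsWithin_le_nhds
      · filter_upwards [self_mem_nhdsWithin] with z hz
        simp only [Set.mem_compl_iff, Set.mem_singleton_iff] at hz ⊢
        intro h
        exact hz (congrArg Prod.fst h)
    filter_upwards [hcont.eventually hev] with z hz
    have hn : ‖((z, (0 : EuclideanSpace ℂ (Fin m)))
        : EuclideanSpace ℂ (Fin m) × EuclideanSpace ℂ (Fin m)) - (z₀, 0)‖ = ‖z - z₀‖ := by
      rw [Prod.norm_def]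
      simp [max_eq_left (norm_nonneg _)]
    rw [hn] at hz
    simpa using hz
  · -- base bound implies product bound
    rintro ⟨hc, C, hev⟩
    rw [eventually_nhdsWithin_iff, Metric.eventually_nhds_iff] at hev
    obtain ⟨δ, hδ, hP⟩ := hev
    obtain ⟨ε, hε, hεD⟩ := Metric.isOpen_iff.mp hD z₀ hz₀
    set r₀ : ℝ := min δ ε / 2 with hr₀def
    have hr₀ : 0 < r₀ := half_pos (lt_min hδ hε)
    have hr₀δ : r₀ < δ := by
      have := min_le_left δ ε; rw [hr₀def]; linarith
    have hr₀ε : r₀ < ε := by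
      have := min_le_right δ ε; rw [hr₀def]; linarith
    have hcenter : ∀ r : ℝ, 0 < r → r ≤ r₀ → φ z₀ ≤ ((c * Real.log r + C : ℝ) : EReal) := by
      intro r h1 h2
      apply psh_center_le m hm D φ hφ z₀ _ r h1
      · exact subset_trans (Metric.closedBall_subset_ball (lt_of_le_of_lt h2 hr₀ε)) hεD
      · intro z hz
        have hzne : z ∈ ({z₀}ᶜ : Set (EuclideanSpace ℂ (Fin m))) := by
          simp only [Set.mem_compl_iff, Set.mem_singleton_iff]
          intro h
          rw [h, sub_self, norm_zero] at hz
          exact h1.ne' hz.symm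
        have hd : dist z z₀ < δ := by
          rw [dist_eq_norm, hz]; exact lt_of_le_of_lt h2 hr₀δ
        have := hP hd hzne
        rwa [hz] at this
    refine ⟨hc, C + c * Real.log 2, ?_⟩
    rw [eventually_nhdsWithin_iff, Metric.eventually_nhds_iff]
    refine ⟨r₀, hr₀, fun zw hzw hne => ?_⟩
    have hne' : zw ≠ (z₀, 0) := by
      simpa [Set.mem_compl_iff, Set.mem_singleton_iff] using hne
    have hN0 : 0 < ‖zw - ((z₀, 0) : EuclideanSpace ℂ (Fin m) × EuclideanSpace ℂ (Fin m))‖ :=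
      norm_pos_iff.mpr (sub_ne_zero.mpr hne')
    by_cases hz : zw.1 - zw.2 = z₀
    · -- center point
      rw [hz]
      by_cases hc0 : c = 0
      · subst hc0
        have := hcenter r₀ hr₀ le_rfl
        simp only [zero_mul, zero_add] at this ⊢
        calc φ z₀ ≤ ((C : ℝ) : EReal) := this
          _ = (((C + 0 * Real.log 2 : ℝ)) : EReal) := by norm_num
          _ ≤ _ := by norm_num
      · have hcpos : 0 < c := lt_of_le_of_ne hc (Ne.symm hc0)
        have hbot : φ z₀ = ⊥ := by
          rcases eq_or_ne (φ z₀) ⊥ with h | h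
          · exact h
          · exfalso
            obtain ⟨K, hK1, hK2⟩ := EReal.exists_between_coe_real (Ne.bot_lt h)
            have hKle : φ z₀ ≤ (K : EReal) := by
              set r : ℝ := min r₀ (Real.exp ((K - C) / c)) with hrdef
              have hrpos : 0 < r := lt_min hr₀ (Real.exp_pos _)
              have h1 := hcenter r hrpos (min_le_left _ _)
              have hlog : Real.log r ≤ (K - C) / c := by
                calc Real.log r ≤ Real.log (Real.exp ((K - C) / c)) :=
                      Real.log_le_log hrpos (min_le_right _ _)
                  _ = (K - C) / c := Real.log_exp _
              have h2 : c * Real.log r + C ≤ K := by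
                have := mul_le_mul_of_nonneg_left hlog hc
                rw [mul_div_cancel₀ (K - C) hc0] at this
                linarith
              exact le_trans h1 (by exact_mod_cast h2)
            exact absurd hKle (not_le.mpr hK2)
        rw [hbot]
        exact bot_le
    · -- away from the center
      have ht0 : 0 < ‖zw.1 - zw.2 - z₀‖ := norm_pos_iff.mpr (sub_ne_zero.mpr hz)
      have hdd : dist zw ((z₀, 0) : EuclideanSpace ℂ (Fin m) × EuclideanSpace ℂ (Fin m)) =
          max (dist zw.1 z₀) (dist zw.2 0) := Prod.dist_eq
      have h1' : ‖zw.1 - z₀‖ < r₀ := by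
        rw [hdd] at hzw
        have := lt_of_le_of_lt (le_max_left (dist zw.1 z₀) (dist zw.2 0)) hzw
        rwa [dist_eq_norm] at this
      have h2' : ‖zw.2‖ < r₀ := by
        rw [hdd] at hzw
        have := lt_of_le_of_lt (le_max_right (dist zw.1 z₀) (dist zw.2 0)) hzw
        rwa [dist_eq_norm, sub_zero] at this
      have htri : ‖zw.1 - zw.2 - z₀‖ ≤ ‖zw.1 - z₀‖ + ‖zw.2‖ := by
        have : zw.1 - zw.2 - z₀ = zw.1 - z₀ - zw.2 := sub_right_comm _ _ _
        rw [this]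
        exact norm_sub_le _ _
      have hdist : dist (zw.1 - zw.2) z₀ < δ := by
        rw [dist_eq_norm]
        calc ‖zw.1 - zw.2 - z₀‖ ≤ ‖zw.1 - z₀‖ + ‖zw.2‖ := htri
          _ < r₀ + r₀ := add_lt_add h1' h2'
          _ ≤ δ := by rw [hr₀def]; have := min_le_left δ ε; linarith
      have hzmem : zw.1 - zw.2 ∈ ({z₀}ᶜ : Set (EuclideanSpace ℂ (Fin m))) := by
        simpa [Set.mem_compl_iff, Set.mem_singleton_iff] using hz
      have key := hP hdist hzmem
      refine le_trans key ?_
      rw [EReal.coe_le_coe_iff]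
      have ht2N : ‖zw.1 - zw.2 - z₀‖ ≤
          2 * ‖zw - ((z₀, 0) : EuclideanSpace ℂ (Fin m) × EuclideanSpace ℂ (Fin m))‖ := by
        have hNdef : ‖zw - ((z₀, 0) : EuclideanSpace ℂ (Fin m) × EuclideanSpace ℂ (Fin m))‖ =
            max ‖zw.1 - z₀‖ ‖zw.2‖ := by
          rw [Prod.norm_def]
          simp
        rw [hNdef]
        calc ‖zw.1 - zw.2 - z₀‖ ≤ ‖zw.1 - z₀‖ + ‖zw.2‖ := htri
          _ ≤ max ‖zw.1 - z₀‖ ‖zw.2‖ + max ‖zw.1 - z₀‖ ‖zw.2‖ :=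
              add_le_add (le_max_left _ _) (le_max_right _ _)
          _ = 2 * max ‖zw.1 - z₀‖ ‖zw.2‖ := by ring
      have hlog : Real.log ‖zw.1 - zw.2 - z₀‖ ≤
          Real.log 2 + Real.log ‖zw - ((z₀, 0) : EuclideanSpace ℂ (Fin m) × EuclideanSpace ℂ (Fin m))‖ := by
        rw [← Real.log_mul two_ne_zero hN0.ne']
        exact Real.log_le_log ht0 ht2N
      have := mul_le_mul_of_nonneg_left hlog hc
      nlinarith [this]
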